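/- arXiv:1903.09111 — 2 statements merged into one kernel-verified Lean document; each statement's English description precedes it below -/
import Mathlib

section
/- Let Q > 0, let h, f : ℂ → ℝ be continuous, let U ⊆ ℂ be nonempty and bounded, let ε > 0, and let C = 2^k for some k ∈ ℤ be a dyadic scaling factor. Define g : ℂ → ℝ by g(w) := h(w/C) and set T := C^Q · exp(−sup_{z∈U} f(z)). Then D_{h+f}^ε(z,w;U) ≤ D_g^{Tε}(Cz, Cw; CU) for all z, w ∈ U, where CU := {Cu : u ∈ U}. -/
open MeasureTheory Real Set

noncomputable section

/-- A closed axis-parallel square in the plane (identified with `ℂ`),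
given by its bottom-left corner `(x, y)` and its positive side length. -/
structure DySquare where
  x : ℝ
  y : ℝ
  side : ℝ
  side_pos : 0 < side

namespace DySquare

/-- The closed square as a subset of `ℂ`. -/
def toSet (S : DySquare) : Set ℂ :=
  {z : ℂ | S.x ≤ z.re ∧ z.re ≤ S.x + S.side ∧ S.y ≤ z.im ∧ z.im ≤ S.y + S.side}

/-- The center `v_S` of the square. -/
def center (S : DySquare) : ℂ :=
  ⟨S.x + S.side / 2, S.y + S.side / 2⟩

/-- A square is dyadic if its side length is `2^{-n}` for some `n : ℤ`
and its corners lie in `2^{-n} ℤ²`. -/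
def IsDyadic (S : DySquare) : Prop :=
  ∃ n : ℤ, S.side = 2 ^ (-n) ∧ ∃ a b : ℤ, S.x = a * 2 ^ (-n) ∧ S.y = b * 2 ^ (-n)

end DySquare

/-- The circle average `h_r(z)` of a function `h : ℂ → ℝ`. -/
def circleAvg (h : ℂ → ℝ) (r : ℝ) (z : ℂ) : ℝ :=
  (2 * π)⁻¹ * ∫ θ in (0:ℝ)..(2 * π), h (z + (r : ℂ) * Complex.exp ((θ : ℂ) * Complex.I))

/-- `M_h(S) = exp(h_{|S|/2}(v_S)) |S|^Q`, the "LQG size" of the square `S`. -/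
def Mass (h : ℂ → ℝ) (Q : ℝ) (S : DySquare) : ℝ :=
  Real.exp (circleAvg h (S.side / 2) S.center) * S.side ^ Q

/-- The dyadic tiling `𝒮_h^ε(U)`: dyadic squares `S ⊆ U` with `M_h(S) ≤ ε` such that
every strictly larger dyadic square `S'` with `S ⊊ S' ⊆ U` satisfies `M_h(S') > ε`. -/
def Tiling (h : ℂ → ℝ) (Q ε : ℝ) (U : Set ℂ) : Set DySquare :=
  {S | S.IsDyadic ∧ S.toSet ⊆ U ∧ Mass h Q S ≤ ε ∧
    ∀ S' : DySquare, S'.IsDyadic → S.toSet ⊂ S'.toSet → S'.toSet ⊆ U → ε < Mass h Q S'}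

/-- There is a chain of `k+1` squares of `𝒮_h^ε(U)` from a square containing `z` to a
square containing `w`, consecutive squares being equal or adjacent (i.e. their
intersection contains more than one point). -/
def HasChain (h : ℂ → ℝ) (Q ε : ℝ) (U : Set ℂ) (z w : ℂ) (k : ℕ) : Prop :=
  ∃ S : ℕ → DySquare, (∀ j ≤ k, S j ∈ Tiling h Q ε U) ∧
    z ∈ (S 0).toSet ∧ w ∈ (S k).toSet ∧
    ∀ j, 1 ≤ j → j ≤ k → ((S (j - 1)).toSet ∩ (S j).toSet).Nontrivial

/-- The graph distance `D_h^ε(z, w; U)`, with value `∞` if no finite chain exists. -/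
def GDist (h : ℂ → ℝ) (Q ε : ℝ) (U : Set ℂ) (z w : ℂ) : ℕ∞ :=
  sInf {n : ℕ∞ | ∃ k : ℕ, n = (k : ℕ∞) ∧ HasChain h Q ε U z w k}


/-!
Rescaling by `C⁻¹ = 2 ^ (-k)` maps dyadic squares to dyadic squares. A square `S'` of the
tiling for `h (· / C)` on `C U` thus becomes a dyadic square `S ⊆ U` with
`M_h(S) = C ^ (-Q) M_{h(·/C)}(S') ≤ exp (-sup_U f) ε`, and since the circle average of `f` over
`S` is at most `sup_U f`, also `M_{h+f}(S) ≤ ε`. As `U` is bounded, `S` lies in a maximal such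
dyadic square, i.e. in a square of the tiling for `h + f` on `U`. Replacing every square of a
chain by this tile yields a chain of the same length; adjacency survives because the rescaling
is injective.
-/

namespace DySquare

def scale (S : DySquare) (c : ℝ) (hc : 0 < c) : DySquare :=
  ⟨c * S.x, c * S.y, c * S.side, mul_pos hc S.side_pos⟩

variable (S : DySquare) {c : ℝ} (hc : 0 < c)

theorem scale_inv_scale : (S.scale c⁻¹ (inv_pos.2 hc)).scale c hc = S := by
  simp [scale, mul_inv_cancel_left₀ hc.ne']

theorem ofReal_mul_mem_toSet_scale_iff (z : ℂ) :
    (c : ℂ) * z ∈ (S.scale c hc).toSet ↔ z ∈ S.toSet := by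
  simp only [toSet, scale, mem_ofPred_eq, Complex.re_ofReal_mul, Complex.im_ofReal_mul, ← mul_add,
    mul_le_mul_iff_right₀ hc]

theorem toSet_scale : (S.scale c hc).toSet = (fun z : ℂ => (c : ℂ) * z) '' S.toSet := by
  have hc0 : (c : ℂ) ≠ 0 := by exact_mod_cast hc.ne'
  ext u
  constructor
  · intro hu
    refine ⟨(c : ℂ)⁻¹ * u, ?_, mul_inv_cancel_left₀ hc0 u⟩
    rwa [← S.ofReal_mul_mem_toSet_scale_iff hc, mul_inv_cancel_left₀ hc0]
  · rintro ⟨z, hz, rfl⟩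
    exact (S.ofReal_mul_mem_toSet_scale_iff hc z).2 hz

theorem center_scale : (S.scale c hc).center = (c : ℂ) * S.center := by
  apply Complex.ext <;> simp [center, scale] <;> ring

theorem IsDyadic.of_scale {S : DySquare} (hS : (S.scale c hc).IsDyadic) {j : ℤ}
    (hcj : c = 2 ^ j) : S.IsDyadic := by
  obtain ⟨n, hside, a, b, hx, hy⟩ := hS
  have hzpow : (2 : ℝ) ^ (-(n + j)) = c⁻¹ * 2 ^ (-n) := by
    rw [hcj, neg_add, zpow_add₀ two_ne_zero, zpow_neg 2 j, mul_comm]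
  refine ⟨n + j, ?_, a, b, ?_, ?_⟩ <;> simp only [scale] at hside hx hy <;>
    rw [hzpow] <;> field_simp <;> linarith

theorem lowerLeft_mem_toSet : (⟨S.x, S.y⟩ : ℂ) ∈ S.toSet :=
  ⟨le_rfl, by simp [S.side_pos.le], le_rfl, by simp [S.side_pos.le]⟩

theorem upperRight_mem_toSet : (⟨S.x + S.side, S.y + S.side⟩ : ℂ) ∈ S.toSet :=
  ⟨by simp [S.side_pos.le], le_rfl, by simp [S.side_pos.le], le_rfl⟩

theorem side_le_diam {U : Set ℂ} (hU : Bornology.IsBounded U) (hS : S.toSet ⊆ U) :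
    S.side ≤ Metric.diam U := by
  calc S.side = |((⟨S.x + S.side, S.y + S.side⟩ : ℂ) - ⟨S.x, S.y⟩).re| := by
        simp [abs_of_pos S.side_pos]
    _ ≤ dist (⟨S.x + S.side, S.y + S.side⟩ : ℂ) ⟨S.x, S.y⟩ := by
        rw [Complex.dist_eq]; exact Complex.abs_re_le_norm _
    _ ≤ Metric.diam U := Metric.dist_le_diam_of_mem hU
        (hS S.upperRight_mem_toSet) (hS S.lowerLeft_mem_toSet)

theorem side_lt_of_toSet_ssubset {S' : DySquare} (hss : S.toSet ⊂ S'.toSet) :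
    S.side < S'.side := by
  obtain ⟨h₁, h₂, h₃, h₄⟩ := hss.subset S.lowerLeft_mem_toSet
  obtain ⟨h₅, h₆, h₇, h₈⟩ := hss.subset S.upperRight_mem_toSet
  by_contra! hle
  refine hss.ne (congrArg toSet ?_)
  obtain ⟨x, y, s, _⟩ := S
  obtain ⟨x', y', s', _⟩ := S'
  simp only at *
  obtain rfl : x = x' := by linarith
  obtain rfl : y = y' := by linarith
  obtain rfl : s = s' := by linarith
  rfl

theorem closedBall_center_subset_toSet :
    Metric.closedBall S.center (S.side / 2) ⊆ S.toSet := by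
  intro u hu
  rw [Metric.mem_closedBall, Complex.dist_eq] at hu
  have hre := (Complex.abs_re_le_norm (u - S.center)).trans hu
  have him := (Complex.abs_im_le_norm (u - S.center)).trans hu
  simp only [Complex.sub_re, Complex.sub_im, center, abs_le] at hre him
  exact ⟨by linarith, by linarith, by linarith, by linarith⟩

end DySquare

theorem circleAvg_eq_circleAverage (h : ℂ → ℝ) (r : ℝ) (z : ℂ) :
    circleAvg h r z = Real.circleAverage h z r :=
  rfl

theorem circleAvg_add {h f : ℂ → ℝ} (hh : Continuous h) (hf : Continuous f) (r : ℝ) (z : ℂ) :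
    circleAvg (fun u => h u + f u) r z = circleAvg h r z + circleAvg f r z := by
  simp only [circleAvg_eq_circleAverage]
  exact Real.circleAverage_fun_add hh.continuousOn.circleIntegrable'
    hf.continuousOn.circleIntegrable'

theorem circleAvg_comp_div (h : ℂ → ℝ) {c : ℝ} (hc : c ≠ 0) (r : ℝ) (z : ℂ) :
    circleAvg (fun u => h (u / (c : ℂ))) (c * r) ((c : ℂ) * z) = circleAvg h r z := by
  have hc0 : (c : ℂ) ≠ 0 := by exact_mod_cast hc
  unfold circleAvg
  congr 1
  refine intervalIntegral.integral_congr fun θ _ => congrArg h ?_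
  push_cast
  field_simp

theorem Mass_nonneg (h : ℂ → ℝ) (Q : ℝ) (S : DySquare) : 0 ≤ Mass h Q S :=
  mul_nonneg (exp_nonneg _) (rpow_nonneg S.side_pos.le Q)

theorem Mass_scale (h : ℂ → ℝ) (Q : ℝ) {c : ℝ} (hc : 0 < c) (S : DySquare) :
    Mass (fun u => h (u / (c : ℂ))) Q (S.scale c hc) = c ^ Q * Mass h Q S := by
  have hside : (S.scale c hc).side = c * S.side := rfl
  rw [Mass, Mass, hside, S.center_scale hc, mul_div_assoc, circleAvg_comp_div h hc.ne',
    mul_rpow hc.le S.side_pos.le]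
  ring

theorem Mass_add_le {h f : ℂ → ℝ} (hh : Continuous h) (hf : Continuous f) (Q : ℝ)
    {S : DySquare} {M : ℝ} (hfM : ∀ u ∈ S.toSet, f u ≤ M) :
    Mass (fun u => h u + f u) Q S ≤ exp M * Mass h Q S := by
  have hsphere : Metric.sphere S.center |S.side / 2| ⊆ S.toSet := by
    rw [abs_of_pos (half_pos S.side_pos)]
    exact Metric.sphere_subset_closedBall.trans S.closedBall_center_subset_toSet
  have havg : circleAvg f (S.side / 2) S.center ≤ M := by
    rw [circleAvg_eq_circleAverage]
    exact Real.circleAverage_mono_on_of_le_circle hf.continuousOn.circleIntegrable'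
      fun u hu => hfM u (hsphere hu)
  calc Mass (fun u => h u + f u) Q S = exp (circleAvg f (S.side / 2) S.center) * Mass h Q S := by
        rw [Mass, Mass, circleAvg_add hh hf, exp_add]; ring
    _ ≤ exp M * Mass h Q S := mul_le_mul_of_nonneg_right (exp_le_exp.2 havg) (Mass_nonneg h Q S)

theorem exists_mem_tiling_superset {h : ℂ → ℝ} {Q ε : ℝ} {U : Set ℂ}
    (hU : Bornology.IsBounded U) {S : DySquare} (hS : S.IsDyadic) (hSU : S.toSet ⊆ U)
    (hmass : Mass h Q S ≤ ε) : ∃ S' ∈ Tiling h Q ε U, S.toSet ⊆ S'.toSet := by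
  let Admissible (m : ℤ) : Prop := ∃ S' : DySquare, S'.IsDyadic ∧ S'.side = 2 ^ (-m) ∧
    S.toSet ⊆ S'.toSet ∧ S'.toSet ⊆ U ∧ Mass h Q S' ≤ ε
  have hbdd : ∃ b : ℤ, ∀ m, Admissible m → b ≤ m := by
    obtain ⟨N, hN⟩ := pow_unbounded_of_one_lt (Metric.diam U) one_lt_two
    refine ⟨-N, fun m ⟨S', _, hside, _, hS'U, _⟩ => ?_⟩
    have hlt : (2 : ℝ) ^ (-m) < 2 ^ (N : ℤ) := by
      rw [zpow_natCast, ← hside]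
      exact (S'.side_le_diam hU hS'U).trans_lt hN
    have := (zpow_lt_zpow_iff_right₀ one_lt_two).1 hlt
    omega
  have hne : ∃ m, Admissible m := by
    obtain ⟨n, hside, -⟩ := id hS
    exact ⟨n, S, hS, hside, subset_rfl, hSU, hmass⟩
  obtain ⟨m, ⟨S', hS'dy, hside', hSS', hS'U, hmass'⟩, hleast⟩ := Int.exists_least_of_bdd hbdd hne
  refine ⟨S', ⟨hS'dy, hS'U, hmass', fun S'' hS''dy hss hS''U => ?_⟩, hSS'⟩
  by_contra! hmass''
  obtain ⟨m'', hside'', -⟩ := id hS''dy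
  have hle := hleast m'' ⟨S'', hS''dy, hside'', hSS'.trans hss.subset, hS''U, hmass''⟩
  have hlt := S'.side_lt_of_toSet_ssubset hss
  rw [hside', hside'', zpow_lt_zpow_iff_right₀ one_lt_two] at hlt
  omega

theorem HasChain.of_mapsTo {h g : ℂ → ℝ} {Q ε ε' : ℝ} {U V : Set ℂ} {ψ : ℂ → ℂ}
    (hψ : Function.Injective ψ)
    (htile : ∀ S' ∈ Tiling g Q ε' V, ∃ S ∈ Tiling h Q ε U, MapsTo ψ S'.toSet S.toSet)
    {z w : ℂ} {n : ℕ} (hchain : HasChain g Q ε' V z w n) : HasChain h Q ε U (ψ z) (ψ w) n := by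
  choose! F hF hFψ using htile
  obtain ⟨S, hS, hz, hw, hadj⟩ := hchain
  refine ⟨F ∘ S, fun j hj => hF _ (hS j hj), hFψ _ (hS 0 n.zero_le) hz,
    hFψ _ (hS n le_rfl) hw, fun j hj hjn => ?_⟩
  have hj' : j - 1 ≤ n := (j.sub_le 1).trans hjn
  exact ((hadj j hj hjn).image hψ).mono <| (image_inter_subset ψ _ _).trans <|
    inter_subset_inter (hFψ _ (hS _ hj')).image_subset (hFψ _ (hS j hjn)).image_subset

theorem GDist_le_of_mapsTo {h g : ℂ → ℝ} {Q ε ε' : ℝ} {U V : Set ℂ} {ψ : ℂ → ℂ}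
    (hψ : Function.Injective ψ)
    (htile : ∀ S' ∈ Tiling g Q ε' V, ∃ S ∈ Tiling h Q ε U, MapsTo ψ S'.toSet S.toSet)
    (z w : ℂ) : GDist h Q ε U (ψ z) (ψ w) ≤ GDist g Q ε' V z w :=
  le_sInf fun _ ⟨n, hn, hchain⟩ => sInf_le ⟨n, hn, hchain.of_mapsTo hψ htile⟩

theorem exists_mem_tiling_mapsTo_of_mem_tiling_scaled {h f : ℂ → ℝ} (hh : Continuous h)
    (hf : Continuous f) {Q ε M : ℝ} {U : Set ℂ} (hU : Bornology.IsBounded U)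
    (hfM : ∀ u ∈ U, f u ≤ M) {C : ℝ} {k : ℤ} (hC : C = 2 ^ k) {S' : DySquare}
    (hS' : S' ∈ Tiling (fun u => h (u / (C : ℂ))) Q (C ^ Q * exp (-M) * ε)
      ((fun u : ℂ => (C : ℂ) * u) '' U)) :
    ∃ S ∈ Tiling (fun u => h u + f u) Q ε U,
      MapsTo (fun u : ℂ => (C : ℂ)⁻¹ * u) S'.toSet S.toSet := by
  have hCpos : 0 < C := hC ▸ zpow_pos two_pos k
  have hC0 : (C : ℂ) ≠ 0 := by exact_mod_cast hCpos.ne'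
  obtain ⟨S, rfl⟩ : ∃ S : DySquare, S.scale C hCpos = S' := ⟨_, S'.scale_inv_scale hCpos⟩
  obtain ⟨hdy, hsub, hmass, -⟩ := hS'
  rw [S.toSet_scale hCpos, image_subset_image_iff (mul_right_injective₀ hC0)] at hsub
  rw [Mass_scale h Q hCpos, mul_assoc, mul_le_mul_iff_right₀ (rpow_pos_of_pos hCpos Q)] at hmass
  have hmassS : Mass (fun u => h u + f u) Q S ≤ ε :=
    calc Mass (fun u => h u + f u) Q S ≤ exp M * Mass h Q S :=
          Mass_add_le hh hf Q fun u hu => hfM u (hsub hu)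
      _ ≤ exp M * (exp (-M) * ε) := by gcongr
      _ = ε := by rw [← mul_assoc, ← exp_add, add_neg_cancel, exp_zero, one_mul]
  obtain ⟨S₁, hS₁, hSS₁⟩ := exists_mem_tiling_superset hU (hdy.of_scale hCpos hC) hsub hmassS
  refine ⟨S₁, hS₁, ?_⟩
  rw [S.toSet_scale hCpos]
  rintro _ ⟨u, hu, rfl⟩
  simpa [hC0] using hSS₁ hu

theorem dist_scaling_inequality_general
    (Q : ℝ) (h f : ℂ → ℝ) (hcont : Continuous h) (hfcont : Continuous f)
    (U : Set ℂ) (hUb : Bornology.IsBounded U)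
    (ε : ℝ) (k : ℤ) (C : ℝ) (hC : C = 2 ^ k)
    (T : ℝ) (hT : T = C ^ Q * Real.exp (-sSup (f '' U))) :
    ∀ z ∈ U, ∀ w ∈ U,
      GDist (fun u => h u + f u) Q ε U z w ≤
        GDist (fun u => h (u / (C : ℂ))) Q (T * ε)
          ((fun u : ℂ => (C : ℂ) * u) '' U) ((C : ℂ) * z) ((C : ℂ) * w) := by
  intro z _ w _
  have hC0 : (C : ℂ) ≠ 0 :=
    Complex.ofReal_ne_zero.2 (hC ▸ (zpow_pos (two_pos : (0 : ℝ) < 2) k).ne')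
  have hbdd : BddAbove (f '' U) :=
    (hUb.isCompact_closure.bddAbove_image hfcont.continuousOn).mono (image_mono subset_closure)
  have hfM : ∀ u ∈ U, f u ≤ sSup (f '' U) := fun u hu => le_csSup hbdd (mem_image_of_mem f hu)
  subst hT
  have hdist := GDist_le_of_mapsTo (Q := Q) (ε := ε) (mul_right_injective₀ (inv_ne_zero hC0))
    (fun S' hS' => exists_mem_tiling_mapsTo_of_mem_tiling_scaled hcont hfcont hUb hfM hC hS')
    ((C : ℂ) * z) ((C : ℂ) * w)
  simpa only [inv_mul_cancel_left₀ hC0] using hdist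

/-- The scaling property (1.4): for a dyadic scaling factor `C = 2^k` and
`T = C^Q exp(-sup_U f)`, one has `D_{h+f}^ε(z,w;U) ≤ D_{h(·/C)}^{Tε}(Cz, Cw; CU)`. -/
theorem dist_scaling_inequality
    (Q : ℝ) (hQ : 0 < Q) (h f : ℂ → ℝ) (hcont : Continuous h) (hfcont : Continuous f)
    (U : Set ℂ) (hUne : U.Nonempty) (hUb : Bornology.IsBounded U)
    (ε : ℝ) (hε : 0 < ε) (k : ℤ) (C : ℝ) (hC : C = 2 ^ k)
    (T : ℝ) (hT : T = C ^ Q * Real.exp (-sSup (f '' U))) :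
    ∀ z ∈ U, ∀ w ∈ U,
      GDist (fun u => h u + f u) Q ε U z w ≤
        GDist (fun u => h (u / (C : ℂ))) Q (T * ε)
          ((fun u : ℂ => (C : ℂ) * u) '' U) ((C : ℂ) * z) ((C : ℂ) * w) :=
  dist_scaling_inequality_general Q h f hcont hfcont U hUb ε k C hC T hT

end
end

section
/- Let Q > 0 and let x ∈ ℝ with 0 ≤ x < Q²/2. For m > 0 define S(m) := ∑_{n=1}^∞ 2^{n·x − (Q·n − m)²/(2n)}. Then S(m) < ∞ for every m > 0, and limsup_{m→∞} (log₂ S(m))/m ≤ Q − √(Q² − 2x). -/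
open Filter

private lemma exp_bound_aux (Q x : ℝ) (hx : x < Q ^ 2 / 2) (δ m : ℝ)
    (hδ0 : 0 ≤ δ) (hδ1 : δ ≤ 1) (n : ℕ) :
    ((n : ℝ) + 1) * x - (Q * ((n : ℝ) + 1) - m) ^ 2 / (2 * ((n : ℝ) + 1)) ≤
      Q * m - (1 - δ) * (m * Real.sqrt (Q ^ 2 - 2 * x))
        - δ * (((n : ℝ) + 1) * (Q ^ 2 / 2 - x)) := by
  set N : ℝ := (n : ℝ) + 1 with hNdef
  have hN : 0 < N := by positivity
  set s : ℝ := Real.sqrt (Q ^ 2 - 2 * x) with hsdef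
  have hs2 : s ^ 2 = Q ^ 2 - 2 * x := Real.sq_sqrt (by linarith)
  have hs0 : 0 ≤ s := Real.sqrt_nonneg _
  clear_value N s
  have key : m * s ≤ N * (Q ^ 2 / 2 - x) + m ^ 2 / (2 * N) := by
    have h1 : m * s - N * (Q ^ 2 / 2 - x) ≤ m ^ 2 / (2 * N) := by
      rw [le_div_iff₀ (by positivity)]
      have hNs : N ^ 2 * s ^ 2 = N ^ 2 * (Q ^ 2 - 2 * x) := by rw [hs2]
      nlinarith [sq_nonneg (N * s - m), hNs]
    linarith
  have hid : N * x - (Q * N - m) ^ 2 / (2 * N)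
      = Q * m - (N * (Q ^ 2 / 2 - x) + m ^ 2 / (2 * N)) := by
    field_simp
    ring
  have h1 : (1 - δ) * (m * s) ≤ (1 - δ) * (N * (Q ^ 2 / 2 - x) + m ^ 2 / (2 * N)) :=
    mul_le_mul_of_nonneg_left key (by linarith)
  have h2 : δ * (N * (Q ^ 2 / 2 - x)) ≤ δ * (N * (Q ^ 2 / 2 - x) + m ^ 2 / (2 * N)) :=
    mul_le_mul_of_nonneg_left (le_add_of_nonneg_right (by positivity)) hδ0
  rw [hid]
  nlinarith [h1, h2]

private lemma term_bound_aux (Q x : ℝ) (hx : x < Q ^ 2 / 2) (δ m : ℝ)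
    (hδ0 : 0 ≤ δ) (hδ1 : δ ≤ 1) (n : ℕ) :
    (2 : ℝ) ^ (((n : ℝ) + 1) * x - (Q * ((n : ℝ) + 1) - m) ^ 2 / (2 * ((n : ℝ) + 1))) ≤
      (2 : ℝ) ^ (Q * m - (1 - δ) * (m * Real.sqrt (Q ^ 2 - 2 * x)))
        * ((2 : ℝ) ^ (-(δ * (Q ^ 2 / 2 - x)))) ^ (n + 1) := by
  have hrw : ((2 : ℝ) ^ (-(δ * (Q ^ 2 / 2 - x)))) ^ (n + 1)
      = (2 : ℝ) ^ (-(δ * (Q ^ 2 / 2 - x)) * ((n : ℝ) + 1)) := by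
    rw [← Real.rpow_natCast ((2 : ℝ) ^ (-(δ * (Q ^ 2 / 2 - x)))) (n + 1),
      ← Real.rpow_mul (by norm_num)]
    push_cast
    ring_nf
  rw [hrw, ← Real.rpow_add (by norm_num)]
  rw [Real.rpow_le_rpow_left_iff (by norm_num : (1 : ℝ) < 2)]
  have := exp_bound_aux Q x hx δ m hδ0 hδ1 n
  nlinarith [this]

private lemma summable_bound_aux (Q x : ℝ) (hx : x < Q ^ 2 / 2) (δ : ℝ) (hδ0 : 0 < δ)
    (C : ℝ) :
    Summable (fun n : ℕ => C * ((2 : ℝ) ^ (-(δ * (Q ^ 2 / 2 - x)))) ^ (n + 1)) := by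
  set r : ℝ := (2 : ℝ) ^ (-(δ * (Q ^ 2 / 2 - x))) with hr
  have hr0 : 0 ≤ r := (Real.rpow_pos_of_pos (by norm_num) _).le
  have hr1 : r < 1 := by
    apply Real.rpow_lt_one_of_one_lt_of_neg (by norm_num)
    nlinarith
  exact ((summable_geometric_of_lt_one hr0 hr1).mul_left (C * r)).congr
    (fun n => by rw [pow_succ']; ring)

private lemma summable_main (Q x : ℝ) (hx : x < Q ^ 2 / 2) (m : ℝ) :
    Summable (fun n : ℕ => (2 : ℝ) ^ (((n : ℝ) + 1) * x -
        (Q * ((n : ℝ) + 1) - m) ^ 2 / (2 * ((n : ℝ) + 1)))) := by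
  apply Summable.of_nonneg_of_le
    (fun n => (Real.rpow_pos_of_pos (by norm_num) _).le)
    (term_bound_aux Q x hx 1 m zero_le_one le_rfl)
  exact summable_bound_aux Q x hx 1 one_pos _

/-- For `0 ≤ x < Q²/2`, the series `S(m) = ∑_{n=1}^∞ 2^{nx - (Qn - m)²/(2n)}` converges for
every `m > 0`, and `limsup_{m→∞} (log₂ S(m))/m ≤ Q - √(Q² - 2x)`. -/
theorem series_limsup_bound
    (Q x : ℝ) (hQ : 0 < Q) (hx0 : 0 ≤ x) (hx : x < Q ^ 2 / 2)
    (S : ℝ → ℝ)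
    (hS : ∀ m : ℝ, S m =
      ∑' n : ℕ, (2 : ℝ) ^ (((n : ℝ) + 1) * x -
        (Q * ((n : ℝ) + 1) - m) ^ 2 / (2 * ((n : ℝ) + 1)))) :
    (∀ m : ℝ, 0 < m →
      Summable (fun n : ℕ => (2 : ℝ) ^ (((n : ℝ) + 1) * x -
        (Q * ((n : ℝ) + 1) - m) ^ 2 / (2 * ((n : ℝ) + 1))))) ∧
    limsup (fun m : ℝ => Real.logb 2 (S m) / m) atTop ≤ Q - Real.sqrt (Q ^ 2 - 2 * x) := by
  set s : ℝ := Real.sqrt (Q ^ 2 - 2 * x) with hsdef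
  have hs : 0 < s := Real.sqrt_pos.mpr (by nlinarith)
  refine ⟨fun m _ => summable_main Q x hx m, ?_⟩
  -- coboundedness: eventual lower bound
  have hlow : ∀ᶠ m : ℝ in atTop, -(Q ^ 3 / 2) ≤ Real.logb 2 (S m) / m := by
    filter_upwards [eventually_ge_atTop (1 : ℝ)] with m hm1
    have hm : 0 < m := lt_of_lt_of_le one_pos hm1
    set k : ℕ := ⌈m / Q⌉₊ with hk
    have hk1 : 1 ≤ k := Nat.one_le_ceil_iff.mpr (by positivity)
    set N : ℝ := ((k - 1 : ℕ) : ℝ) + 1 with hN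
    have hNk : N = (k : ℝ) := by
      rw [hN, Nat.cast_sub hk1]
      push_cast
      ring
    have hN1 : m / Q ≤ N := by rw [hNk]; exact Nat.le_ceil _
    have hN2 : N ≤ m / Q + 1 := by
      rw [hNk]; exact (Nat.ceil_lt_add_one (by positivity)).le
    have hNpos : 0 < N := lt_of_lt_of_le (by positivity) hN1
    clear_value N k
    have hmQ : m ≤ Q * N := by
      have := (div_le_iff₀ hQ).mp hN1
      linarith
    have hQN2 : Q * N - m ≤ Q := by
      have : Q * N ≤ Q * (m / Q + 1) := mul_le_mul_of_nonneg_left hN2 hQ.le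
      have h2 : Q * (m / Q + 1) = m + Q := by field_simp
      linarith
    have hexp : -(Q ^ 3 / (2 * m)) ≤ N * x - (Q * N - m) ^ 2 / (2 * N) := by
      have h1 : (Q * N - m) ^ 2 ≤ Q ^ 2 := by nlinarith
      have h2 : (Q * N - m) ^ 2 / (2 * N) ≤ Q ^ 2 / (2 * (m / Q)) := by
        apply div_le_div₀ (by positivity) h1 (by positivity)
        linarith
      have h3 : Q ^ 2 / (2 * (m / Q)) = Q ^ 3 / (2 * m) := by
        field_simp
      have h4 : 0 ≤ N * x := by positivity
      linarith
    have hterm : (2 : ℝ) ^ (N * x - (Q * N - m) ^ 2 / (2 * N)) ≤ S m := by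
      rw [hS m, hN]
      exact Summable.le_tsum (summable_main Q x hx m) (k - 1)
        (fun i _ => (Real.rpow_pos_of_pos (by norm_num) _).le)
    have hSpos : 0 < S m :=
      lt_of_lt_of_le (Real.rpow_pos_of_pos (by norm_num) _) hterm
    have hlog : -(Q ^ 3 / (2 * m)) ≤ Real.logb 2 (S m) := by
      have := (Real.logb_le_logb (by norm_num : (1 : ℝ) < 2)
        (Real.rpow_pos_of_pos (by norm_num) _) hSpos).mpr hterm
      rw [Real.logb_rpow (by norm_num) (by norm_num)] at this
      linarith
    have hdiv : -(Q ^ 3 / (2 * m)) / m ≤ Real.logb 2 (S m) / m :=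
      div_le_div_of_nonneg_right hlog hm.le
    refine le_trans ?_ hdiv
    rw [neg_div, neg_le_neg_iff, div_div, div_le_div_iff₀ (by positivity) (by norm_num)]
    nlinarith [mul_le_mul hm1 hm1 zero_le_one hm.le, pow_pos hQ 3]
  -- prove limsup ≤ Q - s + ε for all ε > 0
  apply le_of_forall_sub_le
  intro ε hε
  rw [sub_le_iff_le_add]
  set δ : ℝ := min (1 / 2) (ε / (2 * s)) with hδdef
  have hδ0 : 0 < δ := lt_min (by norm_num) (by positivity)
  have hδ1 : δ ≤ 1 := le_trans (min_le_left _ _) (by norm_num)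
  have hδs : δ * s ≤ ε / 2 := by
    calc δ * s ≤ (ε / (2 * s)) * s :=
          mul_le_mul_of_nonneg_right (min_le_right _ _) hs.le
    _ = ε / 2 := by field_simp
  set r : ℝ := (2 : ℝ) ^ (-(δ * (Q ^ 2 / 2 - x))) with hr
  have hr0 : 0 < r := Real.rpow_pos_of_pos (by norm_num) _
  have hr1 : r < 1 := by
    apply Real.rpow_lt_one_of_one_lt_of_neg (by norm_num)
    nlinarith
  set D : ℝ := r * (1 - r)⁻¹ with hD
  have hDpos : 0 < D := mul_pos hr0 (inv_pos.mpr (by linarith))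
  have hpoint : ∀ m : ℝ, 0 < m →
      Real.logb 2 (S m) / m ≤ Q - (1 - δ) * s + Real.logb 2 D / m := by
    intro m hm
    have hsum := summable_main Q x hx m
    have hsum' := summable_bound_aux Q x hx δ hδ0
      ((2 : ℝ) ^ (Q * m - (1 - δ) * (m * s)))
    have hle : S m ≤ (2 : ℝ) ^ (Q * m - (1 - δ) * (m * s)) * D := by
      rw [hS m]
      have h1 : (∑' n : ℕ, (2 : ℝ) ^ (((n : ℝ) + 1) * x -
          (Q * ((n : ℝ) + 1) - m) ^ 2 / (2 * ((n : ℝ) + 1)))) ≤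
          ∑' n : ℕ, (2 : ℝ) ^ (Q * m - (1 - δ) * (m * s)) * r ^ (n + 1) :=
        Summable.tsum_le_tsum (fun n => term_bound_aux Q x hx δ m hδ0.le hδ1 n) hsum hsum'
      refine h1.trans_eq ?_
      have h2 : (fun n : ℕ => (2 : ℝ) ^ (Q * m - (1 - δ) * (m * s)) * r ^ (n + 1))
          = fun n : ℕ => ((2 : ℝ) ^ (Q * m - (1 - δ) * (m * s)) * r) * r ^ n := by
        funext n; rw [pow_succ']; ring
      rw [h2, tsum_mul_left, tsum_geometric_of_lt_one hr0.le hr1, hD]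
      ring
    have hSpos : 0 < S m := by
      rw [hS m]
      exact Summable.tsum_pos hsum (fun n => (Real.rpow_pos_of_pos (by norm_num) _).le) 0
        (Real.rpow_pos_of_pos (by norm_num) _)
    have hlog : Real.logb 2 (S m) ≤ (Q * m - (1 - δ) * (m * s)) + Real.logb 2 D := by
      have := (Real.logb_le_logb (by norm_num : (1 : ℝ) < 2) hSpos
        (by positivity)).mpr hle
      rwa [Real.logb_mul (Real.rpow_pos_of_pos (by norm_num) _).ne' hDpos.ne',
        Real.logb_rpow (by norm_num) (by norm_num)] at this
    have hdiv : Real.logb 2 (S m) / m ≤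
        ((Q * m - (1 - δ) * (m * s)) + Real.logb 2 D) / m :=
      div_le_div_of_nonneg_right hlog hm.le
    refine hdiv.trans_eq ?_
    field_simp
  have ht : Tendsto (fun m : ℝ => Real.logb 2 D / m) atTop (nhds 0) :=
    tendsto_const_nhds.div_atTop tendsto_id
  have hev1 : ∀ᶠ m : ℝ in atTop, Real.logb 2 D / m ≤ ε / 2 :=
    ht.eventually_le_const (by linarith)
  have hev : ∀ᶠ m : ℝ in atTop, Real.logb 2 (S m) / m ≤ Q - s + ε := by
    filter_upwards [hev1, eventually_gt_atTop (0 : ℝ)] with m h1 h2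
    have := hpoint m h2
    nlinarith [hs.le, hδ0.le]
  exact limsup_le_of_le (isCoboundedUnder_le_of_eventually_le atTop hlow) hev
end
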